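/- 4·∫₀^{π/4} θ²/sin(2θ) dθ = π·G − (7/4)·ζ(3). -/

import Mathlib

/-!
Substituting `x = 2θ` turns the left side into `½ ∫₀^{π/2} x² / sin x`. Telescoping
`2 sin x sin((2k+1)x) = cos 2kx - cos 2(k+1)x` gives, for `0 < x ≤ π/2`,
`x² / sin x = ∑_{k<N} 2x² sin((2k+1)x) + (x² / sin x) cos 2Nx`.
The remainder integrates to `o(1)` by the Riemann–Lebesgue lemma, since `x² / sin x` is bounded
on `(0, π/2]`, and `∫₀^{π/2} x² sin((2k+1)x) = π(-1)ᵏ/(2k+1)² - 2/(2k+1)³`.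
Summing over `k` yields `πG - 2 ∑ 1/(2k+1)³`, and the odd part of `ζ(3)` is
`(1 - 2⁻³) ζ(3)`.
-/

open Real MeasureTheory Filter Topology

theorem sin_mul_sum_two_mul_sin_odd_mul (x : ℝ) (N : ℕ) :
    sin x * ∑ k ∈ Finset.range N, 2 * sin ((2 * k + 1) * x) = 1 - cos (2 * N * x) := by
  have hterm : ∀ k : ℕ, sin x * (2 * sin ((2 * k + 1) * x))
      = cos (2 * k * x) - cos (2 * (k + 1 : ℕ) * x) := by
    intro k
    rw [show 2 * (k : ℝ) * x = (2 * k + 1) * x - x by ring,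
      show 2 * ((k + 1 : ℕ) : ℝ) * x = (2 * k + 1) * x + x by push_cast; ring, cos_sub, cos_add]
    ring
  rw [Finset.mul_sum, Finset.sum_congr rfl fun k _ => hterm k, Finset.sum_range_sub']
  simp

theorem div_sin_eq_sum_add {x : ℝ} (hx : sin x ≠ 0) (c : ℝ) (N : ℕ) :
    c / sin x = ∑ k ∈ Finset.range N, 2 * c * sin ((2 * k + 1) * x)
      + c / sin x * cos (2 * N * x) := by
  have hsum : ∑ k ∈ Finset.range N, 2 * c * sin ((2 * k + 1) * x)
      = c / sin x * (sin x * ∑ k ∈ Finset.range N, 2 * sin ((2 * k + 1) * x)) := by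
    rw [← mul_assoc, div_mul_cancel₀ c hx, Finset.mul_sum]
    congr with k
    ring
  rw [hsum, sin_mul_sum_two_mul_sin_odd_mul]
  ring

theorem integral_sq_mul_sin_mul {a : ℝ} (ha : a ≠ 0) (b : ℝ) :
    ∫ x in (0:ℝ)..b, x ^ 2 * sin (a * x)
      = -b ^ 2 * cos (a * b) / a + 2 * b * sin (a * b) / a ^ 2 + 2 * cos (a * b) / a ^ 3
        - 2 / a ^ 3 := by
  have hderiv : ∀ x ∈ Set.uIcc (0:ℝ) b, HasDerivAt
      (fun y => -y ^ 2 * cos (a * y) / a + 2 * y * sin (a * y) / a ^ 2 + 2 * cos (a * y) / a ^ 3)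
      (x ^ 2 * sin (a * x)) x := by
    intro x _
    have hax : HasDerivAt (fun y : ℝ => a * y) a x := by
      simpa using (hasDerivAt_id x).const_mul a
    have hcos := (hasDerivAt_cos (a * x)).comp x hax
    have hsin := (hasDerivAt_sin (a * x)).comp x hax
    have hsq := hasDerivAt_pow 2 x
    have hlin : HasDerivAt (fun y : ℝ => 2 * y) 2 x := by
      simpa using (hasDerivAt_id x).const_mul 2
    refine ((((hsq.neg.mul hcos).div_const a).add ((hlin.mul hsin).div_const (a ^ 2))).add
      ((hcos.const_mul 2).div_const (a ^ 3))).congr_deriv ?_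
    simp only [Function.comp_apply, Pi.neg_apply]
    field_simp
    ring
  rw [intervalIntegral.integral_eq_sub_of_hasDerivAt hderiv
    (Continuous.intervalIntegrable (by fun_prop) _ _)]
  simp

theorem integral_sq_mul_sin_odd_mul (k : ℕ) :
    ∫ x in (0:ℝ)..(π / 2), x ^ 2 * sin ((2 * k + 1) * x)
      = π * (-1) ^ k / (2 * k + 1) ^ 2 - 2 / (2 * k + 1) ^ 3 := by
  have hquarter : (2 * (k : ℝ) + 1) * (π / 2) = π / 2 + k * π := by ring
  have hcos : cos ((2 * (k : ℝ) + 1) * (π / 2)) = 0 := by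
    rw [hquarter, cos_add_nat_mul_pi, cos_pi_div_two, mul_zero]
  have hsin : sin ((2 * (k : ℝ) + 1) * (π / 2)) = (-1) ^ k := by
    rw [hquarter, sin_add_nat_mul_pi, sin_pi_div_two, mul_one]
  rw [integral_sq_mul_sin_mul (by positivity), hcos, hsin]
  field_simp
  ring

theorem intervalIntegrable_sq_div_sin :
    IntervalIntegrable (fun x => x ^ 2 / sin x) volume 0 (π / 2) := by
  rw [intervalIntegrable_iff, Set.uIoc_of_le (by positivity)]
  refine Measure.integrableOn_of_bounded (M := π ^ 2 / 4) measure_Ioc_lt_top.ne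
    (by fun_prop : Measurable fun x : ℝ => x ^ 2 / sin x).aestronglyMeasurable
    ((ae_restrict_iff' measurableSet_Ioc).2 (ae_of_all _ fun x hx => ?_))
  have hjordan := mul_le_sin hx.1.le hx.2
  have hsin : 0 < sin x := lt_of_lt_of_le (by have := hx.1; positivity) hjordan
  rw [Real.norm_eq_abs, abs_of_nonneg (div_nonneg (sq_nonneg x) hsin.le), div_le_iff₀ hsin]
  calc x ^ 2 ≤ π / 2 * x := by nlinarith [hx.1, hx.2]
    _ = π ^ 2 / 4 * (2 / π * x) := by field_simp; ring
    _ ≤ π ^ 2 / 4 * sin x := by gcongr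

theorem Real.tendsto_integral_mul_cos_atTop {f : ℝ → ℝ} (hf : Integrable f) :
    Tendsto (fun t : ℝ => ∫ x, f x * cos (t * x)) atTop (𝓝 0) := by
  -- `∫ f x cos (t x)` is the real part of the Fourier transform of `f` at `t / 2π`.
  have hscale : Tendsto (fun t : ℝ => t / (2 * π)) atTop (cocompact ℝ) :=
    (tendsto_id.atTop_div_const (by positivity)).mono_right (by
      rw [cocompact_eq_atBot_atTop]; exact le_sup_right)
  have hRL := (Complex.continuous_re.tendsto 0).comp
    ((Real.tendsto_integral_exp_smul_cocompact fun x => (f x : ℂ)).comp hscale)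
  rw [Complex.zero_re] at hRL
  refine hRL.congr fun t => ?_
  have hint :
      Integrable fun v : ℝ => Real.fourierChar (-(v * (t / (2 * π)))) • (f v : ℂ) := by
    simpa [mul_comm] using (Real.fourierIntegral_convergent_iff (t / (2 * π))).2 hf.ofReal
  have hre := integral_re hint
  simp only [RCLike.re_to_complex] at hre
  rw [Function.comp_apply, Function.comp_apply, ← hre]
  refine integral_congr_ae (ae_of_all _ fun x => ?_)
  have harg : 2 * π * -(x * (t / (2 * π))) = -(t * x) := by field_simp
  simp only [Circle.smul_def, Real.fourierChar_apply, smul_eq_mul,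
    Complex.re_mul_ofReal, Complex.exp_ofReal_mul_I_re, harg, cos_neg]
  ring

theorem intervalIntegral.tendsto_integral_mul_cos_atTop {f : ℝ → ℝ} {a b : ℝ}
    (hf : IntervalIntegrable f volume a b) :
    Tendsto (fun t : ℝ => ∫ x in a..b, f x * cos (t * x)) atTop (𝓝 0) := by
  have hset : ∀ s, MeasurableSet s → IntegrableOn f s →
      Tendsto (fun t : ℝ => ∫ x in s, f x * cos (t * x)) atTop (𝓝 0) := by
    intro s hs hfs
    refine (Real.tendsto_integral_mul_cos_atTop (hfs.integrable_indicator hs)).congr fun t => ?_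
    rw [← MeasureTheory.integral_indicator hs]
    congr with x
    by_cases hx : x ∈ s <;> simp [hx]
  simpa [intervalIntegral] using (hset _ measurableSet_Ioc hf.1).sub (hset _ measurableSet_Ioc hf.2)

theorem integral_sq_div_sin_eq_sum_add (N : ℕ) :
    ∫ x in (0:ℝ)..(π / 2), x ^ 2 / sin x
      = ∑ k ∈ Finset.range N, 2 * (π * (-1) ^ k / (2 * k + 1) ^ 2 - 2 / (2 * k + 1) ^ 3)
        + ∫ x in (0:ℝ)..(π / 2), x ^ 2 / sin x * cos (2 * N * x) := by
  have hexpand : ∀ x ∈ Set.uIoc (0:ℝ) (π / 2), x ^ 2 / sin x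
      = ∑ k ∈ Finset.range N, 2 * x ^ 2 * sin ((2 * k + 1) * x)
        + x ^ 2 / sin x * cos (2 * N * x) := by
    intro x hx
    rw [Set.uIoc_of_le (by positivity)] at hx
    exact div_sin_eq_sum_add (sin_pos_of_pos_of_lt_pi hx.1 (by linarith [hx.2, pi_pos])).ne' _ _
  rw [intervalIntegral.integral_congr_ae (ae_of_all _ hexpand),
    intervalIntegral.integral_add
      (Continuous.intervalIntegrable (by fun_prop) _ _)
      (intervalIntegrable_sq_div_sin.mul_continuousOn (by fun_prop)),
    intervalIntegral.integral_finsetSum fun k _ => Continuous.intervalIntegrable (by fun_prop) _ _]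
  congr 1
  refine Finset.sum_congr rfl fun k _ => ?_
  simp only [mul_assoc (2:ℝ), intervalIntegral.integral_const_mul, integral_sq_mul_sin_odd_mul]

theorem summable_one_div_nat_add_one_pow {p : ℕ} (hp : 1 < p) :
    Summable fun n : ℕ => 1 / ((n : ℝ) + 1) ^ p := by
  simpa using (summable_nat_add_iff 1).2 (summable_one_div_nat_pow.2 hp)

theorem summable_one_div_two_mul_add_one_pow {p : ℕ} (hp : 1 < p) :
    Summable fun k : ℕ => 1 / (2 * (k : ℝ) + 1) ^ p := by
  simpa [Function.comp_def] using
    (summable_one_div_nat_add_one_pow hp).comp_injective (mul_right_injective₀ two_ne_zero)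

theorem tsum_one_div_two_mul_add_one_pow {p : ℕ} (hp : 1 < p) :
    ∑' k : ℕ, 1 / (2 * (k : ℝ) + 1) ^ p
      = (1 - 1 / 2 ^ p) * ∑' n : ℕ, 1 / ((n : ℝ) + 1) ^ p := by
  have hodd : ∀ k : ℕ,
      1 / (((2 * k + 1 : ℕ) : ℝ) + 1) ^ p = 1 / 2 ^ p * (1 / ((k : ℝ) + 1) ^ p) := by
    intro k
    rw [one_div_mul_one_div, ← mul_pow]
    push_cast
    ring_nf
  have hsplit := tsum_even_add_odd (f := fun n : ℕ => 1 / ((n : ℝ) + 1) ^ p)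
    (by simpa using summable_one_div_two_mul_add_one_pow hp)
    (by simpa only [hodd] using (summable_one_div_nat_add_one_pow hp).mul_left _)
  simp only [hodd, tsum_mul_left, Nat.cast_mul, Nat.cast_ofNat] at hsplit
  linear_combination hsplit

theorem summable_neg_one_pow_div_two_mul_add_one_sq :
    Summable fun k : ℕ => (-1 : ℝ) ^ k / (2 * k + 1) ^ 2 :=
  (summable_one_div_two_mul_add_one_pow one_lt_two).of_norm_bounded fun k => by
    rw [norm_div, norm_pow, norm_neg, norm_one, one_pow, norm_pow,
      Real.norm_of_nonneg (by positivity)]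

theorem hasSum_integral_sq_div_sin :
    HasSum (fun k : ℕ => 2 * (π * (-1) ^ k / (2 * k + 1) ^ 2 - 2 / (2 * k + 1) ^ 3))
      (∫ x in (0:ℝ)..(π / 2), x ^ 2 / sin x) := by
  have hsummable : Summable fun k : ℕ =>
      2 * (π * (-1) ^ k / (2 * k + 1) ^ 2 - 2 / (2 * k + 1) ^ 3) := by
    refine ((summable_neg_one_pow_div_two_mul_add_one_sq.mul_left π).sub
      ((summable_one_div_two_mul_add_one_pow (p := 3) (by norm_num)).mul_left 2)).mul_left 2
      |>.congr fun k => ?_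
    ring
  have hremainder : Tendsto
      (fun N : ℕ => ∫ x in (0:ℝ)..(π / 2), x ^ 2 / sin x * cos (2 * N * x)) atTop (𝓝 0) :=
    (intervalIntegral.tendsto_integral_mul_cos_atTop intervalIntegrable_sq_div_sin).comp
      (tendsto_natCast_atTop_atTop.const_mul_atTop two_pos)
  refine hsummable.hasSum_iff_tendsto_nat.2 ?_
  have hlim := (tendsto_const_nhds (x := ∫ x in (0:ℝ)..(π / 2), x ^ 2 / sin x)).sub hremainder
  rw [sub_zero] at hlim
  refine hlim.congr fun N => ?_
  rw [integral_sq_div_sin_eq_sum_add N]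
  ring

theorem integral_sq_div_sin_two_mul (b : ℝ) :
    ∫ θ in (0:ℝ)..b, θ ^ 2 / sin (2 * θ)
      = 1 / 8 * ∫ x in (0:ℝ)..(2 * b), x ^ 2 / sin x := by
  have hscale : ∀ θ : ℝ, θ ^ 2 / sin (2 * θ) = 1 / 4 * ((2 * θ) ^ 2 / sin (2 * θ)) := by
    intro θ
    ring
  simp_rw [hscale]
  rw [intervalIntegral.integral_const_mul,
    intervalIntegral.integral_comp_mul_left (fun x => x ^ 2 / sin x) two_ne_zero, mul_zero,
    smul_eq_mul]
  ring

theorem stmt18 :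
    4 * (∫ θ in (0:ℝ)..(π/4), θ^2 / Real.sin (2*θ))
    = π * (∑' n : ℕ, (-1:ℝ)^n / (2*n+1)^2) - (7/4) * (∑' n : ℕ, (1:ℝ)/(n+1)^3) := by
  have hcatalan : HasSum (fun k : ℕ => π * (-1) ^ k / (2 * k + 1) ^ 2)
      (π * ∑' n : ℕ, (-1:ℝ) ^ n / (2 * n + 1) ^ 2) := by
    simpa only [mul_div_assoc] using summable_neg_one_pow_div_two_mul_add_one_sq.hasSum.mul_left π
  have hzeta : HasSum (fun k : ℕ => 2 / (2 * (k : ℝ) + 1) ^ 3)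
      (7 / 4 * ∑' n : ℕ, (1:ℝ) / (n + 1) ^ 3) := by
    have hodd : 2 * ∑' k : ℕ, 1 / (2 * (k : ℝ) + 1) ^ 3
        = 7 / 4 * ∑' n : ℕ, (1:ℝ) / (n + 1) ^ 3 := by
      rw [tsum_one_div_two_mul_add_one_pow (by norm_num)]
      ring
    rw [← hodd]
    simpa only [mul_one_div] using
      (summable_one_div_two_mul_add_one_pow (p := 3) (by norm_num)).hasSum.mul_left 2
  rw [integral_sq_div_sin_two_mul, show 2 * (π / 4) = π / 2 by ring,
    ← ((hcatalan.sub hzeta).mul_left 2).unique hasSum_integral_sq_div_sin]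
  ring
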